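/- arXiv:2108.06369 — 2 statements merged into one kernel-verified Lean document; each statement's English description precedes it below -/
import Mathlib

section
/- Let R be a commutative Noetherian ring, let k, n be positive natural numbers, and let I₁, …, Iₙ be ideals of R. Then there exists a natural number M such that the intersection ⋂ᵢ Iᵢ^M is contained in (⋂ᵢ Iᵢ)^k. -/
/-!
By Artin–Rees, for ideals `A`, `B` and large `M` one has `A ^ M ⊓ B ^ k ≤ A ^ k * B ^ k`, which
lies in `(A ⊓ B) ^ k`. Adding the ideals one at a time, with `B` the intersection of those already
added, gives the claim for any finite family.
-/

open Filter

namespace Ideal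

variable {R : Type*} [CommRing R] [IsNoetherianRing R]

theorem eventually_pow_inf_le_pow_mul (A B : Ideal R) (k : ℕ) :
    ∀ᶠ M in atTop, A ^ M ⊓ B ≤ A ^ k * B := by
  obtain ⟨c, hc⟩ := A.exists_pow_inf_eq_pow_smul B
  filter_upwards [eventually_ge_atTop (c + k)] with M hM
  have h := hc M (by omega)
  simp only [smul_eq_mul, mul_top] at h
  calc A ^ M ⊓ B = A ^ (M - c) * (A ^ c ⊓ B) := h
    _ ≤ A ^ k * B := mul_le_mul' (pow_le_pow_right (by omega)) inf_le_right

theorem eventually_pow_inf_pow_le_inf_pow (A B : Ideal R) (k : ℕ) :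
    ∀ᶠ M in atTop, A ^ M ⊓ B ^ k ≤ (A ⊓ B) ^ k := by
  filter_upwards [eventually_pow_inf_le_pow_mul A (B ^ k) k] with M hM
  calc A ^ M ⊓ B ^ k ≤ A ^ k * B ^ k := hM
    _ = (A * B) ^ k := (mul_pow A B k).symm
    _ ≤ (A ⊓ B) ^ k := pow_right_mono mul_le_inf k

theorem eventually_biInf_pow_le_pow_biInf {ι : Type*} (I : ι → Ideal R) (k : ℕ) (s : Finset ι) :
    ∀ᶠ M in atTop, ⨅ i ∈ s, I i ^ M ≤ (⨅ i ∈ s, I i) ^ k := by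
  classical
  induction s using Finset.induction_on with
  | empty => simp
  | insert a s _ ih =>
    filter_upwards [ih, eventually_pow_inf_pow_le_inf_pow (I a) (⨅ i ∈ s, I i) k] with M hs ha
    simp only [Finset.iInf_insert]
    exact (inf_le_inf_left _ hs).trans ha

theorem eventually_iInf_pow_le_pow_iInf {ι : Type*} [Finite ι] (I : ι → Ideal R) (k : ℕ) :
    ∀ᶠ M in atTop, ⨅ i, I i ^ M ≤ (⨅ i, I i) ^ k := by
  have := Fintype.ofFinite ι
  simpa only [Finset.mem_univ, iInf_pos] using eventually_biInf_pow_le_pow_biInf I k Finset.univ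

end Ideal

theorem stmt0_general (R : Type*) [CommRing R] [IsNoetherianRing R]
    (n k : ℕ) (I : Fin n → Ideal R) :
    ∃ M : ℕ, (⨅ i, (I i) ^ M) ≤ (⨅ i, I i) ^ k :=
  (Ideal.eventually_iInf_pow_le_pow_iInf I k).exists

/-- In a commutative Noetherian ring, for ideals `I 1, …, I n` and `k ≥ 1`
there exists `M` with `⋂ i, (I i)^M ⊆ (⋂ i, I i)^k`. -/
theorem stmt0 (R : Type*) [CommRing R] [IsNoetherianRing R]
    (n k : ℕ) (hn : 0 < n) (hk : 0 < k) (I : Fin n → Ideal R) :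
    ∃ M : ℕ, (⨅ i, (I i) ^ M) ≤ (⨅ i, I i) ^ k :=
  stmt0_general R n k I
end

section
/- Let R be a commutative Noetherian ring, let I and J be ideals of R, and let k be a natural number. Then there exists a natural number M such that I^M ∩ J^M ⊆ (I·J)^k ⊆ (I ∩ J)^k. -/
/-! By Artin–Rees applied to `J ^ k`, some `l` gives `I ^ (k + l) ∩ J ^ k ⊆ I ^ k J ^ k = (I J) ^ k`,
so `M = k + l` works, as `J ^ M ⊆ J ^ k`. -/

theorem Submodule.exists_pow_smul_top_inf_le_pow_smul {R M : Type*} [CommRing R]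
    [IsNoetherianRing R] [AddCommGroup M] [Module R M] [Module.Finite R M]
    (I : Ideal R) (N : Submodule R M) :
    ∃ l : ℕ, ∀ k : ℕ, I ^ (k + l) • (⊤ : Submodule R M) ⊓ N ≤ I ^ k • N := by
  obtain ⟨l, hl⟩ := Ideal.exists_pow_inf_eq_pow_smul I N
  refine ⟨l, fun k => ?_⟩
  rw [hl (k + l) (Nat.le_add_left l k), Nat.add_sub_cancel]
  exact Submodule.smul_mono le_rfl inf_le_right

theorem Ideal.exists_pow_inf_le_pow_mul {R : Type*} [CommRing R] [IsNoetherianRing R]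
    (I N : Ideal R) : ∃ l : ℕ, ∀ k : ℕ, I ^ (k + l) ⊓ N ≤ I ^ k * N := by
  simpa only [smul_eq_mul, Ideal.mul_top] using
    Submodule.exists_pow_smul_top_inf_le_pow_smul I N

/-- Two-ideal case via Artin–Rees: in a commutative Noetherian ring,
for ideals `I, J` and `k : ℕ` there is `M` with `I^M ⊓ J^M ⊆ (I*J)^k ⊆ (I ⊓ J)^k`. -/
theorem stmt1 (R : Type*) [CommRing R] [IsNoetherianRing R]
    (I J : Ideal R) (k : ℕ) :
    ∃ M : ℕ, I ^ M ⊓ J ^ M ≤ (I * J) ^ k ∧ (I * J) ^ k ≤ (I ⊓ J) ^ k := by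
  obtain ⟨l, hl⟩ := Ideal.exists_pow_inf_le_pow_mul I (J ^ k)
  refine ⟨k + l, ?_, pow_le_pow_left' (le_inf Ideal.mul_le_left Ideal.mul_le_right) k⟩
  calc I ^ (k + l) ⊓ J ^ (k + l)
      ≤ I ^ (k + l) ⊓ J ^ k := inf_le_inf_left _ (Ideal.pow_le_pow_right (Nat.le_add_right k l))
    _ ≤ I ^ k * J ^ k := hl k
    _ = (I * J) ^ k := (mul_pow I J k).symm
end
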